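/- Let n ≥ 1, 1 < p ≤ 2, p' = p/(p−1), and let N > n be real. There is a constant C > 0 such that for all j, j' ∈ ℤ with j ≤ j' + 8, all k ∈ ℤ^n, and all families (u^{ε'}_{k'})_{ε'∈E_n, k'∈ℤ^n} and (v^{ε''}_{k''})_{ε''∈E_n, k''∈ℤ^n} of nonnegative real numbers: Σ_{ε'∈E_n} Σ_{k'∈ℤ^n} Σ_{ε''∈E_n} Σ_{k''∈ℤ^n} u^{ε'}_{k'} (v^{ε''}_{k''})^{p−1} (1+|2^{j−j'}k'−k|)^{−8N} (1+|k'−k''|)^{−8N} ≤ C Σ_{w∈ℤ^n} Σ_{w'∈ℤ^n} (1+|w|)^{−N} (1+|w'|)^{−N} ( Σ_{ε'∈E_n} Σ_{k' : Q_{j',k'} ⊆ Q^w_{j,k}} (u^{ε'}_{k'})^p )^{1/p} ( Σ_{ε''∈E_n} Σ_{k'' : Q_{j',k''} ⊆ Q^{w'}_{j,k}} (v^{ε''}_{k''})^p )^{1/p'}, both sides interpreted in [0,∞]. -/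

import Mathlib

noncomputable section

open MeasureTheory Real Complex
open scoped ENNReal NNReal

/-- `ℝⁿ` modeled as functions `Fin n → ℝ`. -/
abbrev Vec (n : ℕ) : Type := Fin n → ℝ

/-- Integer lattice `ℤⁿ`. -/
abbrev IVec (n : ℕ) : Type := Fin n → ℤ

/-- The index set `E_n = {0,1}ⁿ \ {0}`, with `{0,1}ⁿ` modeled as `Fin n → Bool`. -/
abbrev En (n : ℕ) : Type := {ε : Fin n → Bool // ε ≠ fun _ => false}

/-- The Euclidean norm on `Vec n`. -/
def enorm2 {n : ℕ} (x : Vec n) : ℝ := Real.sqrt (∑ i, (x i) ^ 2)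

/-- The dyadic cube `Q_{j,k} = {x : 2^j x − k ∈ [0,1)ⁿ}` of side length `2^{−j}`. -/
def dyadicCube (n : ℕ) (j : ℤ) (k : IVec n) : Set (Vec n) :=
  {x | ∀ i, (k i : ℝ) ≤ (2:ℝ) ^ j * x i ∧ (2:ℝ) ^ j * x i < (k i : ℝ) + 1}

/-- `Q^w_{j,k} = 2^{8−j} w + tilde-Q_{j,k}`, where `tilde-Q_{j,k}` is the unique dyadic
cube of side length `2^{8−j}` containing `Q_{j,k}` (its index is `⌊k/2^8⌋`). -/
def QW (n : ℕ) (j : ℤ) (k w : IVec n) : Set (Vec n) :=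
  dyadicCube n (j - 8) (fun i => Int.fdiv (k i) 256 + w i)

/-! Write `j' = j - 8 + m`. The cube `Q_{j',k'}` lies in `Q^w_{j,k}` exactly when
`w = ⌊k'/2^m⌋ - ⌊k/2^8⌋`, so the sums over `k'` and `k''` split into blocks indexed by such
offsets `w` and `w'`. Since `1 + |w| ≲ 1 + |2^{j-j'}k' - k|` and
`1 + |w'| ≲ (1 + |w|)(1 + |k' - k''|)`, the kernel is at most a constant times
`(1 + |w|)^{-N} (1 + |w'|)^{-N} (1 + |k' - k''|)^{-7N}`. The last factor has uniformly bounded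
row and column sums because `7N > n`, so Schur's test with exponents `p, p'` on each pair of
blocks bounds the block sum by the `ℓ^p` norm of `u` times the `ℓ^{p'}` norm of `v^{p-1}`,
which is `‖v‖_p^{p/p'}` on that block. -/

theorem ENNReal.inner_le_Lp_mul_Lq_tsum {ι : Type*} [Countable ι] {p q : ℝ}
    (hpq : p.HolderConjugate q) (f g : ι → ℝ≥0∞) :
    ∑' i, f i * g i ≤ (∑' i, f i ^ p) ^ (1 / p) * (∑' i, g i ^ q) ^ (1 / q) := by
  let _ : MeasurableSpace ι := ⊤
  simpa [lintegral_count] using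
    ENNReal.lintegral_mul_le_Lp_mul_Lq Measure.count hpq
      (measurable_from_top (f := f)).aemeasurable (measurable_from_top (f := g)).aemeasurable

lemma ENNReal.rpow_one_div_mul_rpow_one_div {p q : ℝ} (hpq : p.HolderConjugate q) (x : ℝ≥0∞) :
    x ^ (1 / p) * x ^ (1 / q) = x := by
  rw [← ENNReal.rpow_add_of_nonneg _ _ (by simp [hpq.nonneg]) (by simp [hpq.symm.nonneg]),
    one_div, one_div, hpq.inv_add_inv_eq_one, ENNReal.rpow_one]

lemma ENNReal.tsum_mul_rpow_one_div_rpow_le {ι κ : Type*} {p : ℝ} (hp : 0 < p)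
    (a : ι → ℝ≥0∞) (K : ι → κ → ℝ≥0∞) {S : ℝ≥0∞} (hK : ∀ i, ∑' j, K i j ≤ S) :
    ∑' x : ι × κ, (a x.1 * K x.1 x.2 ^ (1 / p)) ^ p ≤ S * ∑' i, a i ^ p := by
  calc ∑' x : ι × κ, (a x.1 * K x.1 x.2 ^ (1 / p)) ^ p
      = ∑' i, a i ^ p * ∑' j, K i j := by
        rw [ENNReal.tsum_prod']
        refine tsum_congr fun i => ?_
        rw [← ENNReal.tsum_mul_left]
        refine tsum_congr fun j => ?_
        rw [ENNReal.mul_rpow_of_nonneg _ _ hp.le, ← ENNReal.rpow_mul, one_div_mul_cancel hp.ne',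
          ENNReal.rpow_one]
    _ ≤ ∑' i, a i ^ p * S := ENNReal.tsum_le_tsum fun i => by gcongr; exact hK i
    _ = S * ∑' i, a i ^ p := by rw [ENNReal.tsum_mul_right, mul_comm]

/-- Schur's test: Hölder's inequality applied to `(a i K^{1/p}) (b j K^{1/q})`. -/
theorem ENNReal.schur_test {ι κ : Type*} [Countable ι] [Countable κ] {p q : ℝ}
    (hpq : p.HolderConjugate q) (a : ι → ℝ≥0∞) (b : κ → ℝ≥0∞) (K : ι → κ → ℝ≥0∞)
    {S : ℝ≥0∞} (hrow : ∀ i, ∑' j, K i j ≤ S) (hcol : ∀ j, ∑' i, K i j ≤ S) :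
    ∑' (i) (j), a i * b j * K i j ≤
      S * (∑' i, a i ^ p) ^ (1 / p) * (∑' j, b j ^ q) ^ (1 / q) := by
  have hb := ENNReal.tsum_mul_rpow_one_div_rpow_le hpq.symm.pos b (fun j i => K i j) hcol
  rw [← (Equiv.prodComm ι κ).tsum_eq] at hb
  calc ∑' (i) (j), a i * b j * K i j
      = ∑' x : ι × κ, (a x.1 * K x.1 x.2 ^ (1 / p)) * (b x.2 * K x.1 x.2 ^ (1 / q)) := by
        rw [ENNReal.tsum_prod']
        refine tsum_congr fun i => tsum_congr fun j => ?_
        conv_lhs => rw [← ENNReal.rpow_one_div_mul_rpow_one_div hpq (K i j)]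
        ring
    _ ≤ (∑' x : ι × κ, (a x.1 * K x.1 x.2 ^ (1 / p)) ^ p) ^ (1 / p) *
        (∑' x : ι × κ, (b x.2 * K x.1 x.2 ^ (1 / q)) ^ q) ^ (1 / q) :=
        ENNReal.inner_le_Lp_mul_Lq_tsum hpq _ _
    _ ≤ (S * ∑' i, a i ^ p) ^ (1 / p) * (S * ∑' j, b j ^ q) ^ (1 / q) :=
        mul_le_mul'
          (ENNReal.rpow_le_rpow (ENNReal.tsum_mul_rpow_one_div_rpow_le hpq.pos a K hrow)
            (by simp [hpq.nonneg]))
          (ENNReal.rpow_le_rpow hb (by simp [hpq.symm.nonneg]))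
    _ = S * (∑' i, a i ^ p) ^ (1 / p) * (∑' j, b j ^ q) ^ (1 / q) := by
        rw [ENNReal.mul_rpow_of_nonneg _ _ (by simp [hpq.nonneg]),
          ENNReal.mul_rpow_of_nonneg _ _ (by simp [hpq.symm.nonneg])]
        conv_rhs => rw [← ENNReal.rpow_one_div_mul_rpow_one_div hpq S]
        ring

lemma ENNReal.tsum_eq_tsum_fiber {α β : Type*} (φ : α → β) (f : α → ℝ≥0∞) :
    ∑' a, f a = ∑' (b : β) (a : {a // φ a = b}), f a := by
  rw [← (Equiv.sigmaFiberEquiv φ).tsum_eq f, ENNReal.tsum_sigma']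
  rfl

theorem ENNReal.schur_test_fiberwise {ι β : Type*} [Countable ι] {p q : ℝ}
    (hpq : p.HolderConjugate q) (φ : ι → β) (V : β → β → ℝ≥0∞) (a b : ι → ℝ≥0∞)
    (K : ι → ι → ℝ≥0∞) {S : ℝ≥0∞} (hrow : ∀ x, ∑' y, K x y ≤ S)
    (hcol : ∀ y, ∑' x, K x y ≤ S) :
    ∑' (x) (y), V (φ x) (φ y) * (a x * b y * K x y) ≤
      S * ∑' (w) (w'), V w w' * (∑' x : {x // φ x = w}, a x ^ p) ^ (1 / p) *
        (∑' y : {y // φ y = w'}, b y ^ q) ^ (1 / q) := by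
  have hfib (w w' : β) : ∑' (x : {x // φ x = w}) (y : {y // φ y = w'}), a x * b y * K x y ≤
      S * (∑' x : {x // φ x = w}, a x ^ p) ^ (1 / p) *
        (∑' y : {y // φ y = w'}, b y ^ q) ^ (1 / q) :=
    ENNReal.schur_test hpq _ _ _
      (fun x => (ENNReal.tsum_comp_le_tsum_of_injective Subtype.val_injective _).trans (hrow x))
      (fun y => (ENNReal.tsum_comp_le_tsum_of_injective Subtype.val_injective
        (fun x => K x y)).trans (hcol y))
  calc ∑' (x) (y), V (φ x) (φ y) * (a x * b y * K x y)
      = ∑' (w) (w'), V w w' *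
          ∑' (x : {x // φ x = w}) (y : {y // φ y = w'}), a x * b y * K x y := by
        rw [ENNReal.tsum_eq_tsum_fiber φ]
        refine tsum_congr fun w => ?_
        simp_rw [ENNReal.tsum_eq_tsum_fiber (β := β) φ (fun y => V _ (φ y) * _)]
        rw [ENNReal.tsum_comm]
        refine tsum_congr fun w' => ?_
        rw [← ENNReal.tsum_mul_left]
        refine tsum_congr fun x => ?_
        rw [← ENNReal.tsum_mul_left]
        refine tsum_congr fun y => ?_
        rw [x.2, y.2]
    _ ≤ ∑' (w) (w'), V w w' * (S * (∑' x : {x // φ x = w}, a x ^ p) ^ (1 / p) *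
          (∑' y : {y // φ y = w'}, b y ^ q) ^ (1 / q)) := by
        gcongr with w w'
        exact hfib w w'
    _ = _ := by
        rw [← ENNReal.tsum_mul_left]
        refine tsum_congr fun w => ?_
        rw [← ENNReal.tsum_mul_left]
        refine tsum_congr fun w' => ?_
        ring

lemma ENNReal.tsum_subtype_snd_eq {E κ : Type*} {P Q : κ → Prop} (hPQ : ∀ k, P k ↔ Q k)
    (f : E → κ → ℝ≥0∞) :
    ∑' x : {x : E × κ // P x.2}, f x.1.1 x.1.2 = ∑' (e : E) (k : {k // Q k}), f e k := by
  let e : E × {k // Q k} ≃ {x : E × κ // P x.2} :=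
    { toFun z := ⟨(z.1, z.2), (hPQ _).mpr z.2.2⟩
      invFun x := (x.1.1, ⟨x.1.2, (hPQ _).mp x.2⟩)
      left_inv _ := rfl
      right_inv _ := rfl }
  rw [← e.tsum_eq, ENNReal.tsum_prod']
  rfl

lemma Int.ediv_eq_floor_div {a b : ℤ} (hb : 0 ≤ b) : a / b = ⌊(a : ℝ) / b⌋ := by
  rw [Int.floor_div_cast_of_nonneg hb, Int.floor_intCast]

lemma abs_floor_div_sub_floor_div_le {a : ℝ} (ha : 1 ≤ a) (x y : ℝ) :
    |((⌊x / a⌋ - ⌊y / a⌋ : ℤ) : ℝ)| ≤ |x - y| + 1 := by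
  have ha0 : 0 < a := by linarith
  have hdiv : |x / a - y / a| ≤ |x - y| := by
    rw [← sub_div, abs_div, abs_of_pos ha0]
    exact div_le_self (abs_nonneg _) ha
  have := Int.floor_le (x / a)
  have := Int.lt_floor_add_one (x / a)
  have := Int.floor_le (y / a)
  have := Int.lt_floor_add_one (y / a)
  rw [abs_le] at hdiv ⊢
  push_cast
  constructor <;> linarith

lemma rpow_neg_mul_rpow_neg_le {N a₁ a₂ b b' c : ℝ} (hN : 0 ≤ N) (ha₁ : 1 ≤ a₁) (ha₂ : 1 ≤ a₂)
    (hb : 0 < b) (hb' : 0 < b') (hc : 0 < c) (h₁ : b ≤ c * a₁) (h₂ : b' ≤ c * (b * a₂)) :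
    a₁ ^ (-(8 * N)) * a₂ ^ (-(8 * N)) ≤ (c ^ 3) ^ N * (b ^ (-N) * b' ^ (-N)) * a₂ ^ (-(7 * N)) := by
  have hbb' : b * b' * a₂ ^ 7 / c ^ 3 ≤ a₁ ^ 8 * a₂ ^ 8 := by
    rw [div_le_iff₀ (by positivity)]
    have : b * b' ≤ c ^ 3 * (a₁ ^ 2 * a₂) := by
      calc b * b' ≤ (c * a₁) * (c * ((c * a₁) * a₂)) :=
            mul_le_mul h₁ (h₂.trans (by gcongr)) hb'.le (by positivity)
        _ = c ^ 3 * (a₁ ^ 2 * a₂) := by ring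
    have ha₁8 : a₁ ^ 2 ≤ a₁ ^ 8 := pow_le_pow_right₀ ha₁ (by norm_num)
    calc b * b' * a₂ ^ 7 ≤ c ^ 3 * (a₁ ^ 2 * a₂) * a₂ ^ 7 := by gcongr
      _ ≤ c ^ 3 * (a₁ ^ 8 * a₂) * a₂ ^ 7 := by gcongr
      _ = a₁ ^ 8 * a₂ ^ 8 * c ^ 3 := by ring
  have hpow {x : ℝ} (hx : 0 < x) (k : ℕ) : x ^ (-((k : ℝ) * N)) = (x ^ k) ^ (-N) := by
    rw [← mul_neg, Real.rpow_natCast_mul hx.le]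
  have hc3 : (0 : ℝ) ≤ c ^ 3 := by positivity
  convert Real.rpow_le_rpow_of_nonpos (by positivity) hbb' (neg_nonpos.mpr hN) using 1
  · rw [Real.mul_rpow (by positivity) (by positivity), ← hpow (by linarith) 8,
      ← hpow (by linarith) 8]
    norm_num
  · rw [Real.div_rpow (by positivity) hc3, Real.mul_rpow (by positivity) (by positivity),
      Real.mul_rpow hb.le hb'.le, ← hpow (by linarith) 7, Real.rpow_neg hb.le N,
      Real.rpow_neg hb'.le N, Real.rpow_neg hc3 N, div_inv_eq_mul]
    norm_num
    ring

section

variable {n : ℕ}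

lemma enorm2_eq_norm (x : Vec n) : enorm2 x = ‖WithLp.toLp 2 x‖ := by
  simp [enorm2, EuclideanSpace.norm_eq]

lemma enorm2_nonneg (x : Vec n) : 0 ≤ enorm2 x := Real.sqrt_nonneg _

lemma one_add_enorm2_pos (x : Vec n) : 0 < 1 + enorm2 x := by
  linarith [enorm2_nonneg x]

lemma enorm2_add_le (x y : Vec n) : enorm2 (x + y) ≤ enorm2 x + enorm2 y := by
  simpa only [enorm2_eq_norm, WithLp.toLp_add] using norm_add_le _ _

lemma one_add_enorm2_add_le (x y : Vec n) :
    1 + enorm2 (x + y) ≤ (1 + enorm2 x) * (1 + enorm2 y) := by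
  nlinarith [enorm2_add_le x y, mul_nonneg (enorm2_nonneg x) (enorm2_nonneg y)]

lemma one_add_enorm2_le_of_abs_le {x y : Vec n} (h : ∀ i, |x i| ≤ |y i| + 1) :
    1 + enorm2 x ≤ (1 + √n) * (1 + enorm2 y) := by
  have hx : enorm2 x ≤ enorm2 ((fun i => |y i|) + fun _ => 1) :=
    Real.sqrt_le_sqrt <| Finset.sum_le_sum fun i _ => by
      rw [← sq_abs (x i)]
      exact pow_le_pow_left₀ (abs_nonneg _) (h i) 2
  have hy : enorm2 (fun i => |y i|) = enorm2 y := by simp [enorm2]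
  have h1 : enorm2 (fun _ : Fin n => (1 : ℝ)) = √n := by simp [enorm2]
  nlinarith [enorm2_add_le (fun i => |y i|) (fun _ => 1),
    mul_nonneg (enorm2_nonneg y) (Real.sqrt_nonneg n)]

theorem summable_one_add_enorm2_rpow_neg {s : ℝ} (hs : (n : ℝ) < s) :
    Summable fun z : IVec n => (1 + enorm2 (fun i => (z i : ℝ))) ^ (-s) := by
  let b := (EuclideanSpace.basisFun (Fin n) ℝ).toBasis
  let L := Submodule.span ℤ (Set.range b)
  have hmem (z : IVec n) : WithLp.toLp 2 (fun i => (z i : ℝ)) ∈ L := by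
    rw [b.mem_span_iff_repr_mem ℤ]
    intro i
    simp [b]
  have hrank : Module.finrank ℤ L = n := by
    rw [ZLattice.rank ℝ L, finrank_euclideanSpace_fin]
  have hL := (ZLattice.summable_norm_rpow L (-s) (by rw [hrank]; linarith)).comp_injective
    (i := fun z : IVec n => (⟨_, hmem z⟩ : L)) (by
      intro z z' h
      funext i
      simpa using congrFun (congrArg (fun x : L => (x : EuclideanSpace ℝ (Fin n)).ofLp) h) i)
  refine hL.of_norm_bounded_eventually ((Filter.eventually_cofinite_ne 0).mono fun z hz => ?_)
  have hpos : 0 < ‖WithLp.toLp 2 (fun i => (z i : ℝ))‖ := by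
    rw [norm_pos_iff]
    intro h
    exact hz (funext fun i => by simpa using congrFun (congrArg WithLp.ofLp h) i)
  rw [enorm2_eq_norm, Real.norm_of_nonneg (by positivity)]
  change _ ≤ ‖WithLp.toLp 2 (fun i => (z i : ℝ))‖ ^ (-s)
  exact Real.rpow_le_rpow_of_nonpos hpos (by linarith) (by linarith)

lemma tsum_prod_ofReal_one_add_enorm2_sub_rpow_left {E : Type*} [Fintype E] (s : ℝ)
    (a : IVec n) :
    ∑' y : E × IVec n, ENNReal.ofReal ((1 + enorm2 (fun i => (a i : ℝ) - y.2 i)) ^ (-s)) =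
      Fintype.card E *
        ∑' z : IVec n, ENNReal.ofReal ((1 + enorm2 (fun i => (z i : ℝ))) ^ (-s)) := by
  have htrans : ∑' z : IVec n, ENNReal.ofReal ((1 + enorm2 (fun i => (a i : ℝ) - z i)) ^ (-s)) =
      ∑' z : IVec n, ENNReal.ofReal ((1 + enorm2 (fun i => (z i : ℝ))) ^ (-s)) := by
    rw [← (Equiv.subLeft a).tsum_eq]
    simp [Equiv.subLeft]
  simp only [ENNReal.tsum_prod', htrans, tsum_fintype, Finset.sum_const, Finset.card_univ,
    nsmul_eq_mul]

lemma tsum_prod_ofReal_one_add_enorm2_sub_rpow_right {E : Type*} [Fintype E] (s : ℝ)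
    (a : IVec n) :
    ∑' y : E × IVec n, ENNReal.ofReal ((1 + enorm2 (fun i => (y.2 i : ℝ) - a i)) ^ (-s)) =
      Fintype.card E *
        ∑' z : IVec n, ENNReal.ofReal ((1 + enorm2 (fun i => (z i : ℝ))) ^ (-s)) := by
  have htrans : ∑' z : IVec n, ENNReal.ofReal ((1 + enorm2 (fun i => (z i : ℝ) - a i)) ^ (-s)) =
      ∑' z : IVec n, ENNReal.ofReal ((1 + enorm2 (fun i => (z i : ℝ))) ^ (-s)) := by
    rw [← (Equiv.addRight a).tsum_eq]
    simp [Equiv.addRight]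
  simp only [ENNReal.tsum_prod', htrans, tsum_fintype, Finset.sum_const, Finset.card_univ,
    nsmul_eq_mul]

lemma dyadicCube_eq_pi (j : ℤ) (k : IVec n) :
    dyadicCube n j k = Set.univ.pi fun i => Set.Ico ((k i : ℝ) / 2 ^ j) ((k i + 1) / 2 ^ j) := by
  have h2j : (0 : ℝ) < 2 ^ j := by positivity
  ext x
  simp only [dyadicCube, Set.mem_ofPred_eq, Set.mem_univ_pi, Set.mem_Ico, div_le_iff₀' h2j,
    lt_div_iff₀' h2j]

theorem dyadicCube_subset_dyadicCube_iff (m : ℕ) (j : ℤ) (k c : IVec n) :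
    dyadicCube n j k ⊆ dyadicCube n (j - m) c ↔ ∀ i, k i / 2 ^ m = c i := by
  have h2j : (0 : ℝ) < 2 ^ j := by positivity
  have hpow : (2 : ℝ) ^ (j - m) = 2 ^ j / 2 ^ m := by rw [zpow_sub₀ two_ne_zero, zpow_natCast]
  rw [dyadicCube_eq_pi, dyadicCube_eq_pi, Set.univ_pi_subset_univ_pi_iff]
  simp only [Set.Ico_eq_empty_iff, div_lt_div_iff_of_pos_right h2j, lt_add_one,
    not_true_eq_false, exists_false, or_false]
  refine forall_congr' fun i => ?_
  rw [Set.Ico_subset_Ico_iff (div_lt_div_of_pos_right (lt_add_one _) h2j), hpow,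
    Int.ediv_eq_iff_of_pos (by positivity)]
  simp only [div_div_eq_mul_div, div_le_div_iff_of_pos_right h2j]
  have hcast : ((c i : ℝ) + 1) * 2 ^ m = ((c i * 2 ^ m + 2 ^ m : ℤ) : ℝ) := by push_cast; ring
  rw [hcast, show (c i : ℝ) * 2 ^ m = ((c i * 2 ^ m : ℤ) : ℝ) by push_cast; ring]
  norm_cast

/-- The offset `w` with `Q_{j',k'} ⊆ Q^w_{j,k}`, where `j' = j - 8 + m`. -/
def cubeOffset (m : ℕ) (k k' : IVec n) : IVec n := fun i => k' i / 2 ^ m - k i / 256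

lemma dyadicCube_subset_QW_iff {m : ℕ} {j j' : ℤ} (hm : j' = j - 8 + m) (k k' w : IVec n) :
    dyadicCube n j' k' ⊆ QW n j k w ↔ cubeOffset m k k' = w := by
  rw [QW, show j - 8 = j' - m by omega, dyadicCube_subset_dyadicCube_iff, funext_iff]
  refine forall_congr' fun i => ?_
  rw [Int.fdiv_eq_ediv_of_nonneg _ (by norm_num), cubeOffset]
  omega

lemma tsum_cubeOffset_eq_tsum_subset_QW {m : ℕ} {j j' : ℤ} (hm : j' = j - 8 + m)
    (k w : IVec n) (f : En n → IVec n → ℝ≥0∞) :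
    ∑' x : {x : En n × IVec n // cubeOffset m k x.2 = w}, f x.1.1 x.1.2 =
      ∑' (ε : En n) (k' : {k' : IVec n // dyadicCube n j' k' ⊆ QW n j k w}), f ε k' :=
  ENNReal.tsum_subtype_snd_eq (fun k' => (dyadicCube_subset_QW_iff hm k k' w).symm) f

lemma one_add_enorm2_cubeOffset_le {m : ℕ} {j j' : ℤ} (hm : j' = j - 8 + m) (k k' : IVec n) :
    1 + enorm2 (fun i => (cubeOffset m k k' i : ℝ)) ≤
      (1 + √n) * (1 + enorm2 (fun i => (2 : ℝ) ^ (j - j') * k' i - k i)) := by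
  refine one_add_enorm2_le_of_abs_le fun i => ?_
  have hscale : (2 : ℝ) ^ (j - j') * k' i / 256 = k' i / ((2 ^ m : ℤ) : ℝ) := by
    rw [hm, show j - (j - 8 + m) = 8 - (m : ℤ) by ring, zpow_sub₀ two_ne_zero, zpow_natCast]
    push_cast
    field_simp
    ring
  have h256 : k i / 256 = ⌊(k i : ℝ) / 256⌋ := by
    rw [Int.ediv_eq_floor_div (by norm_num)]
    norm_num
  simp only [cubeOffset]
  rw [Int.ediv_eq_floor_div (by positivity), ← hscale, h256]
  exact abs_floor_div_sub_floor_div_le (by norm_num) _ _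

lemma one_add_enorm2_cubeOffset_le_mul (m : ℕ) (k k' k'' : IVec n) :
    1 + enorm2 (fun i => (cubeOffset m k k'' i : ℝ)) ≤
      (1 + √n) * ((1 + enorm2 (fun i => (cubeOffset m k k' i : ℝ))) *
        (1 + enorm2 (fun i => (k' i : ℝ) - k'' i))) := by
  have hdiff : 1 + enorm2 (fun i => (cubeOffset m k k'' i - cubeOffset m k k' i : ℝ)) ≤
      (1 + √n) * (1 + enorm2 (fun i => (k' i : ℝ) - k'' i)) := by
    refine one_add_enorm2_le_of_abs_le fun i => ?_
    have hfloor (a : ℤ) : a / 2 ^ m = ⌊(a : ℝ) / 2 ^ m⌋ := by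
      rw [Int.ediv_eq_floor_div (by positivity)]
      push_cast
      rfl
    have hsub : (cubeOffset m k k'' i : ℝ) - cubeOffset m k k' i =
        ((⌊(k'' i : ℝ) / 2 ^ m⌋ - ⌊(k' i : ℝ) / 2 ^ m⌋ : ℤ) : ℝ) := by
      simp only [cubeOffset, hfloor]
      push_cast
      ring
    rw [hsub, abs_sub_comm (k' i : ℝ)]
    exact abs_floor_div_sub_floor_div_le (one_le_pow₀ one_le_two) _ _
  calc 1 + enorm2 (fun i => (cubeOffset m k k'' i : ℝ))
      ≤ (1 + enorm2 (fun i => (cubeOffset m k k' i : ℝ))) *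
          (1 + enorm2 (fun i => (cubeOffset m k k'' i - cubeOffset m k k' i : ℝ))) := by
        convert one_add_enorm2_add_le _ _ using 3
        ext i; simp
    _ ≤ _ := by
        rw [mul_left_comm]
        gcongr
        exact add_nonneg zero_le_one (enorm2_nonneg _)

lemma ofReal_kernel_le_offset_weights {N : ℝ} (hN : 0 ≤ N) {m : ℕ} {j j' : ℤ} (hm : j' = j - 8 + m)
    (k k' k'' : IVec n) :
    ENNReal.ofReal ((1 + enorm2 (fun i => (2 : ℝ) ^ (j - j') * k' i - k i)) ^ (-(8 * N))) *
        ENNReal.ofReal ((1 + enorm2 (fun i => (k' i : ℝ) - k'' i)) ^ (-(8 * N))) ≤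
      ENNReal.ofReal (((1 + √n) ^ 3) ^ N) *
        (ENNReal.ofReal ((1 + enorm2 (fun i => (cubeOffset m k k' i : ℝ))) ^ (-N)) *
          ENNReal.ofReal ((1 + enorm2 (fun i => (cubeOffset m k k'' i : ℝ))) ^ (-N))) *
        ENNReal.ofReal ((1 + enorm2 (fun i => (k' i : ℝ) - k'' i)) ^ (-(7 * N))) := by
  have h1 (x : Vec n) : (1 : ℝ) ≤ 1 + enorm2 x := le_add_of_nonneg_right (enorm2_nonneg x)
  have hw (x : Vec n) (s : ℝ) : 0 ≤ (1 + enorm2 x) ^ s :=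
    Real.rpow_nonneg (one_add_enorm2_pos x).le s
  rw [← ENNReal.ofReal_mul (hw _ _), ← ENNReal.ofReal_mul (hw _ _),
    ← ENNReal.ofReal_mul (by positivity), ← ENNReal.ofReal_mul' (hw _ _)]
  exact ENNReal.ofReal_le_ofReal <| rpow_neg_mul_rpow_neg_le hN (h1 _) (h1 _) (one_add_enorm2_pos _)
    (one_add_enorm2_pos _) (by positivity)
    (one_add_enorm2_cubeOffset_le hm k k') (one_add_enorm2_cubeOffset_le_mul m k k' k'')

theorem tsum_kernel_le_tsum_cube_norms {p N : ℝ} (hp : 1 < p) (hN : 0 ≤ N) {m : ℕ} {j j' : ℤ}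
    (hm : j' = j - 8 + m) (k : IVec n) (u v : En n → IVec n → ℝ≥0) :
    (∑' (ε' : En n) (k' : IVec n) (ε'' : En n) (k'' : IVec n),
        (u ε' k' : ℝ≥0∞) * (v ε'' k'' : ℝ≥0∞) ^ (p - 1) *
          ENNReal.ofReal ((1 + enorm2 (fun i => (2 : ℝ) ^ (j - j') * k' i - k i)) ^ (-(8 * N))) *
          ENNReal.ofReal ((1 + enorm2 (fun i => (k' i : ℝ) - k'' i)) ^ (-(8 * N)))) ≤
      ENNReal.ofReal (((1 + √n) ^ 3) ^ N) * (Fintype.card (En n) *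
        ∑' z : IVec n, ENNReal.ofReal ((1 + enorm2 (fun i => (z i : ℝ))) ^ (-(7 * N)))) *
      ∑' (w : IVec n) (w' : IVec n),
        ENNReal.ofReal ((1 + enorm2 (fun i => (w i : ℝ))) ^ (-N)) *
        ENNReal.ofReal ((1 + enorm2 (fun i => (w' i : ℝ))) ^ (-N)) *
        (∑' (ε' : En n) (k' : {k' : IVec n // dyadicCube n j' k' ⊆ QW n j k w}),
            (u ε' (k' : IVec n) : ℝ≥0∞) ^ (p : ℝ)) ^ (1 / p) *
        (∑' (ε'' : En n) (k'' : {k'' : IVec n // dyadicCube n j' k'' ⊆ QW n j k w'}),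
            (v ε'' (k'' : IVec n) : ℝ≥0∞) ^ (p : ℝ)) ^ (1 / (p / (p - 1))) := by
  have hpq : p.HolderConjugate (p / (p - 1)) := .conjExponent hp
  set W : IVec n → ℝ≥0∞ := fun w => ENNReal.ofReal ((1 + enorm2 (fun i => (w i : ℝ))) ^ (-N))
  set K : En n × IVec n → En n × IVec n → ℝ≥0∞ := fun x y =>
    ENNReal.ofReal ((1 + enorm2 (fun i => (x.2 i : ℝ) - y.2 i)) ^ (-(7 * N)))
  set S := (Fintype.card (En n) : ℝ≥0∞) *
    ∑' z : IVec n, ENNReal.ofReal ((1 + enorm2 (fun i => (z i : ℝ))) ^ (-(7 * N)))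
  calc _ = ∑' (x : En n × IVec n) (y : En n × IVec n),
        ((u x.1 x.2 : ℝ≥0∞) * (v y.1 y.2 : ℝ≥0∞) ^ (p - 1)) *
          (ENNReal.ofReal ((1 + enorm2 (fun i => (2 : ℝ) ^ (j - j') * x.2 i - k i)) ^ (-(8 * N))) *
          ENNReal.ofReal ((1 + enorm2 (fun i => (x.2 i : ℝ) - y.2 i)) ^ (-(8 * N)))) := by
        simp only [ENNReal.tsum_prod', mul_assoc]
    _ ≤ ∑' (x : En n × IVec n) (y : En n × IVec n), ENNReal.ofReal (((1 + √n) ^ 3) ^ N) *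
        (W (cubeOffset m k x.2) * W (cubeOffset m k y.2) *
          ((u x.1 x.2 : ℝ≥0∞) * (v y.1 y.2 : ℝ≥0∞) ^ (p - 1) * K x y)) := by
        refine ENNReal.tsum_le_tsum fun x => ENNReal.tsum_le_tsum fun y => ?_
        calc _ ≤ ((u x.1 x.2 : ℝ≥0∞) * (v y.1 y.2 : ℝ≥0∞) ^ (p - 1)) * _ :=
              mul_le_mul_right (ofReal_kernel_le_offset_weights hN hm k x.2 y.2) _
          _ = _ := by ring
    _ ≤ ENNReal.ofReal (((1 + √n) ^ 3) ^ N) * (S * ∑' (w) (w'), W w * W w' *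
          (∑' x : {x : En n × IVec n // cubeOffset m k x.2 = w},
            (u x.1.1 x.1.2 : ℝ≥0∞) ^ p) ^ (1 / p) *
          (∑' y : {y : En n × IVec n // cubeOffset m k y.2 = w'},
            ((v y.1.1 y.1.2 : ℝ≥0∞) ^ (p - 1)) ^ (p / (p - 1))) ^ (1 / (p / (p - 1)))) := by
        simp only [ENNReal.tsum_mul_left]
        have h := ENNReal.schur_test_fiberwise hpq (fun x : En n × IVec n => cubeOffset m k x.2)
          (fun w w' => W w * W w') (fun x => (u x.1 x.2 : ℝ≥0∞))
          (fun y => (v y.1 y.2 : ℝ≥0∞) ^ (p - 1)) K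
          (fun x => (tsum_prod_ofReal_one_add_enorm2_sub_rpow_left _ x.2).le)
          (fun y => (tsum_prod_ofReal_one_add_enorm2_sub_rpow_right _ y.2).le)
        exact mul_le_mul_right h _
    _ = _ := by
        have hpow (x : ℝ≥0∞) : (x ^ (p - 1)) ^ (p / (p - 1)) = x ^ p := by
          rw [← ENNReal.rpow_mul, mul_div_cancel₀ _ (by linarith : p - 1 ≠ 0)]
        rw [← mul_assoc]
        congr 1
        refine tsum_congr fun w => tsum_congr fun w' => ?_
        rw [tsum_cubeOffset_eq_tsum_subset_QW hm k w (fun e k' => (u e k' : ℝ≥0∞) ^ p),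
          tsum_cubeOffset_eq_tsum_subset_QW hm k w'
            (fun e k'' => ((v e k'' : ℝ≥0∞) ^ (p - 1)) ^ (p / (p - 1)))]
        simp only [hpow]
        rfl

end

theorem statement8_general (n : ℕ) (p N : ℝ) (hp1 : 1 < p) (hN : (n : ℝ) < N) :
    ∃ C : ℝ, 0 < C ∧ ∀ (j j' : ℤ), j ≤ j' + 8 → ∀ (k : IVec n)
      (u v : En n → IVec n → ℝ≥0),
      (∑' (ε' : En n) (k' : IVec n) (ε'' : En n) (k'' : IVec n),
          (u ε' k' : ℝ≥0∞) * (v ε'' k'' : ℝ≥0∞) ^ (p - 1) *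
            ENNReal.ofReal
              ((1 + enorm2 (fun i => (2:ℝ) ^ (j - j') * (k' i : ℝ) - (k i : ℝ))) ^ (-(8*N))) *
            ENNReal.ofReal
              ((1 + enorm2 (fun i => (k' i : ℝ) - (k'' i : ℝ))) ^ (-(8*N)))) ≤
      ENNReal.ofReal C *
        ∑' (w : IVec n) (w' : IVec n),
          ENNReal.ofReal ((1 + enorm2 (fun i => (w i : ℝ))) ^ (-N)) *
          ENNReal.ofReal ((1 + enorm2 (fun i => (w' i : ℝ))) ^ (-N)) *
          (∑' (ε' : En n) (k' : {k' : IVec n // dyadicCube n j' k' ⊆ QW n j k w}),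
              (u ε' (k' : IVec n) : ℝ≥0∞) ^ (p : ℝ)) ^ (1 / p) *
          (∑' (ε'' : En n) (k'' : {k'' : IVec n // dyadicCube n j' k'' ⊆ QW n j k w'}),
              (v ε'' (k'' : IVec n) : ℝ≥0∞) ^ (p : ℝ)) ^ (1 / (p / (p - 1))) := by
  have hN0 : 0 ≤ N := (Nat.cast_nonneg n).trans hN.le
  set A : ℝ≥0∞ := ENNReal.ofReal (((1 + √n) ^ 3) ^ N) * (Fintype.card (En n) *
    ∑' z : IVec n, ENNReal.ofReal ((1 + enorm2 (fun i => (z i : ℝ))) ^ (-(7 * N))))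
  have hA : A ≠ ⊤ := by
    refine ENNReal.mul_ne_top ENNReal.ofReal_ne_top
      (ENNReal.mul_ne_top (ENNReal.natCast_ne_top _) ?_)
    rw [← ENNReal.ofReal_tsum_of_nonneg (fun z => Real.rpow_nonneg (one_add_enorm2_pos _).le _)
      (summable_one_add_enorm2_rpow_neg (by linarith))]
    exact ENNReal.ofReal_ne_top
  refine ⟨A.toReal + 1, by positivity, fun j j' hj k u v => ?_⟩
  obtain ⟨m, hm⟩ : ∃ m : ℕ, j' = j - 8 + m := ⟨(j' + 8 - j).toNat, by omega⟩
  refine (tsum_kernel_le_tsum_cube_norms hp1 hN0 hm k u v).trans (mul_le_mul_left ?_ _)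
  rw [ENNReal.le_ofReal_iff_toReal_le hA (by positivity)]
  linarith

/-- the Cauchy–Schwarz-type estimate of Lemma `inequality3`
(`1 < p ≤ 2`, `p' = p/(p−1)`, `N > n`), with both sides valued in `[0,∞]`. -/
theorem statement8 (n : ℕ) (hn : 1 ≤ n) (p N : ℝ) (hp1 : 1 < p) (hp2 : p ≤ 2)
    (hN : (n : ℝ) < N) :
    ∃ C : ℝ, 0 < C ∧ ∀ (j j' : ℤ), j ≤ j' + 8 → ∀ (k : IVec n)
      (u v : En n → IVec n → ℝ≥0),
      (∑' (ε' : En n) (k' : IVec n) (ε'' : En n) (k'' : IVec n),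
          (u ε' k' : ℝ≥0∞) * (v ε'' k'' : ℝ≥0∞) ^ (p - 1) *
            ENNReal.ofReal
              ((1 + enorm2 (fun i => (2:ℝ) ^ (j - j') * (k' i : ℝ) - (k i : ℝ))) ^ (-(8*N))) *
            ENNReal.ofReal
              ((1 + enorm2 (fun i => (k' i : ℝ) - (k'' i : ℝ))) ^ (-(8*N)))) ≤
      ENNReal.ofReal C *
        ∑' (w : IVec n) (w' : IVec n),
          ENNReal.ofReal ((1 + enorm2 (fun i => (w i : ℝ))) ^ (-N)) *
          ENNReal.ofReal ((1 + enorm2 (fun i => (w' i : ℝ))) ^ (-N)) *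
          (∑' (ε' : En n) (k' : {k' : IVec n // dyadicCube n j' k' ⊆ QW n j k w}),
              (u ε' (k' : IVec n) : ℝ≥0∞) ^ (p : ℝ)) ^ (1 / p) *
          (∑' (ε'' : En n) (k'' : {k'' : IVec n // dyadicCube n j' k'' ⊆ QW n j k w'}),
              (v ε'' (k'' : IVec n) : ℝ≥0∞) ^ (p : ℝ)) ^ (1 / (p / (p - 1))) :=
  statement8_general n p N hp1 hN
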